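/- Let (M,d) be a metric space and X, Y ⊆ M. Assume there exists a ∈ (0,∞) such that for each ρ ∈ (0,a) and each x' ∈ X there exists x'' ∈ X with d(x',x'') = ρ. Let υ_Y ∈ (0,∞), β ∈ (0,1], s₂ ∈ [β,∞), s₃ ∈ (0,1], with s₂ − β > υ_Y, s₂ < υ_Y + β + s₃, and in addition s₂ ≤ υ_Y + s₃. Let ν be a measure on a σ-algebra of subsets of Y containing the Borel subsets of Y, with ν(B(x,r) ∩ Y) < ∞ for all x ∈ X and r > 0, and ν(Y) < ∞. Let Y be upper υ_Y-Ahlfors regular with respect to X and let Z ∈ 𝒦_{υ_Y,s₂,s₃}(X×Y). If there exists C > 0 such that for every g ∈ C^{0,β}(X∪Y) the function Q[Z,g,1] is bounded and β-Hölder continuous on X with sup-norm plus Hölder seminorm at most C·|g|_β, then sup_{x∈X} sup_{r>0} |∫_{Y\B(x,r)} Z(x,y) dν(y)| < ∞. -/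

import Mathlib

open MeasureTheory Metric Set
open scoped ENNReal

noncomputable section

variable {M : Type*} [MetricSpace M] [MeasurableSpace M] [BorelSpace M]

/-- `Y` is upper `υ`-Ahlfors regular with respect to `X`:
there exist `r₀ ∈ (0,∞]` and `c > 0` with `ν (B(x,r) ∩ Y) ≤ c rᵘ` for `x ∈ X`, `0 < r < r₀`. -/
def UpperAhlforsRegular (ν : Measure M) (X Y : Set M) (υ : ℝ) : Prop :=
  ∃ c : ℝ, 0 < c ∧ ∃ r₀ : ℝ≥0∞, 0 < r₀ ∧
    ∀ x ∈ X, ∀ r : ℝ, 0 < r → ENNReal.ofReal r < r₀ →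
      ν (ball x r ∩ Y) ≤ ENNReal.ofReal (c * r ^ υ)

/-- `Y` is strongly upper `υ`-Ahlfors regular with respect to `X`. -/
def StronglyUpperAhlforsRegular (ν : Measure M) (X Y : Set M) (υ : ℝ) : Prop :=
  ∃ c : ℝ, 0 < c ∧ ∃ r₀ : ℝ≥0∞, 0 < r₀ ∧
    ∀ x ∈ X, ∀ r₁ r₂ : ℝ, 0 ≤ r₁ → r₁ < r₂ → ENNReal.ofReal r₂ < r₀ →
      ν ((ball x r₂ \ ball x r₁) ∩ Y) ≤ ENNReal.ofReal (c * (r₂ ^ υ - r₁ ^ υ))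

/-- the set of values `d(x,y)^{s₁} |K(x,y)|`, `x ∈ X`, `y ∈ Y`, `x ≠ y`. -/
def kernelSet₁ (X Y : Set M) (s₁ : ℝ) (K : M → M → ℂ) : Set ℝ :=
  {t | ∃ x ∈ X, ∃ y ∈ Y, x ≠ y ∧ t = dist x y ^ s₁ * ‖K x y‖}

/-- the set of values `(d(x',y)^{s₂}/d(x',x'')^{s₃}) |K(x',y) - K(x'',y)|`,
`x', x'' ∈ X`, `x' ≠ x''`, `y ∈ Y \ B(x', 2 d(x',x''))`. -/
def kernelSet₂ (X Y : Set M) (s₂ s₃ : ℝ) (K : M → M → ℂ) : Set ℝ :=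
  {t | ∃ x' ∈ X, ∃ x'' ∈ X, x' ≠ x'' ∧ ∃ y ∈ Y \ ball x' (2 * dist x' x''),
        t = dist x' y ^ s₂ / dist x' x'' ^ s₃ * ‖K x' y - K x'' y‖}

/-- membership in the kernel class `𝒦_{s₁,s₂,s₃}(X×Y)`: continuity off the diagonal
together with finiteness of the two suprema defining the norm. -/
def MemK (X Y : Set M) (s₁ s₂ s₃ : ℝ) (K : M → M → ℂ) : Prop :=
  ContinuousOn (fun p : M × M => K p.1 p.2) ((X ×ˢ Y) \ {p : M × M | p.1 = p.2}) ∧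
  BddAbove (kernelSet₁ X Y s₁ K) ∧ BddAbove (kernelSet₂ X Y s₂ s₃ K)

/-- the norm `‖K‖` of the class `𝒦_{s₁,s₂,s₃}(X×Y)`. -/
def kNorm (X Y : Set M) (s₁ s₂ s₃ : ℝ) (K : M → M → ℂ) : ℝ :=
  sSup (kernelSet₁ X Y s₁ K) + sSup (kernelSet₂ X Y s₂ s₃ K)

/-- the set of values `|∫_{Y \ B(x,r)} K(x,y) dν(y)|`, `x ∈ X`, `r > 0`
(the maximal function values). -/
def maxFunSet (ν : Measure M) (X Y : Set M) (K : M → M → ℂ) : Set ℝ :=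
  {t | ∃ x ∈ X, ∃ r : ℝ, 0 < r ∧ t = ‖∫ y in Y \ ball x r, K x y ∂ν‖}

/-- membership in the kernel class `𝒦♯_{s₁,s₂,s₃}(X×Y)`. -/
def MemKSharp (ν : Measure M) (X Y : Set M) (s₁ s₂ s₃ : ℝ) (K : M → M → ℂ) : Prop :=
  MemK X Y s₁ s₂ s₃ K ∧
  (∀ x ∈ X, ∀ r : ℝ, 0 < r → IntegrableOn (K x) (Y \ ball x r) ν) ∧
  BddAbove (maxFunSet ν X Y K)

/-- the norm of the class `𝒦♯_{s₁,s₂,s₃}(X×Y)`. -/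
def kNormSharp (ν : Measure M) (X Y : Set M) (s₁ s₂ s₃ : ℝ) (K : M → M → ℂ) : ℝ :=
  kNorm X Y s₁ s₂ s₃ K + sSup (maxFunSet ν X Y K)

/-- the set of Hölder quotients `|g x - g y| / d(x,y)^β`, `x, y ∈ D`, `x ≠ y`. -/
def holderSet (D : Set M) (β : ℝ) (g : M → ℂ) : Set ℝ :=
  {t | ∃ x ∈ D, ∃ y ∈ D, x ≠ y ∧ t = ‖g x - g y‖ / dist x y ^ β}

/-- `g` is `β`-Hölder continuous on `D`. -/
def IsHolderOn (D : Set M) (β : ℝ) (g : M → ℂ) : Prop :=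
  BddAbove (holderSet D β g)

/-- the `β`-Hölder seminorm `|g|_β` of `g` on `D`. -/
def holderSemi (D : Set M) (β : ℝ) (g : M → ℂ) : ℝ :=
  sSup (holderSet D β g)

def supValSet (D : Set M) (f : M → ℂ) : Set ℝ := {t | ∃ x ∈ D, t = ‖f x‖}

/-- `f` is bounded on `D`. -/
def BoundedOnSet (D : Set M) (f : M → ℂ) : Prop := BddAbove (supValSet D f)

/-- the sup-norm of `f` on `D`. -/
def supNormOn (D : Set M) (f : M → ℂ) : ℝ := sSup (supValSet D f)

/-- `Q[Z,g,1](x) = ∫_Y Z(x,y) (g(x) - g(y)) dν(y)`. -/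
def Qop (ν : Measure M) (Y : Set M) (Z : M → M → ℂ) (g : M → ℂ) (x : M) : ℂ :=
  ∫ y in Y, Z x y * (g x - g y) ∂ν

/-- the modulus of continuity `ω_θ`. -/
def omegaMod (θ r : ℝ) : ℝ :=
  if r ≤ 0 then 0
  else if r ≤ Real.exp (-1 / θ) then r ^ θ * |Real.log r|
  else Real.exp (-1 / θ) ^ θ * |Real.log (Real.exp (-1 / θ))|


/-! Fix `x ∈ X` and a small radius `2 r`. The test function `g = (min (max (d(x,·) - r) 0) r) ^ β`
has `|g|_β ≤ 1`, vanishes on `B(x,r)` and equals `r ^ β` off `B(x,2r)`. Hence `-Q g x` is `r ^ β`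
times the truncated integral `∫_{Y \ B(x,2r)} Z(x,·)` plus an integral over `B(x,2r)`, which is
`O(r ^ β)` by `|Z(x,y)| ≤ ‖Z‖ d(x,y)^(-υ)` and Ahlfors regularity. At a point `x'` with
`d(x,x') = 4 r` the integrand of `Q g x'` is supported in `B(x,2r)`, at distance `≥ 2 r` from `x'`,
so `Q g x' = O(r ^ β)` as well, while `|Q g x - Q g x'| ≤ C (4 r) ^ β`. Dividing by `r ^ β` bounds
the truncated integrals uniformly; for large radii the kernel bound and `ν Y < ∞` suffice. -/

theorem Real.abs_rpow_sub_rpow_le {β u v : ℝ} (hβ0 : 0 ≤ β) (hβ1 : β ≤ 1) (hu : 0 ≤ u)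
    (hv : 0 ≤ v) : |u ^ β - v ^ β| ≤ |u - v| ^ β := by
  wlog hvu : v ≤ u generalizing u v
  · rw [abs_sub_comm, abs_sub_comm u]
    exact this hv hu (le_of_not_ge hvu)
  have hsub := Real.rpow_add_le_add_rpow (sub_nonneg.2 hvu) hv hβ0 hβ1
  rw [sub_add_cancel] at hsub
  rw [abs_of_nonneg (sub_nonneg.2 (Real.rpow_le_rpow hv hvu hβ0)),
    abs_of_nonneg (sub_nonneg.2 hvu)]
  linarith

section Ramp

variable {α : Type*} [PseudoMetricSpace α] {x y p q : α} {r β : ℝ}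

def distRamp (x : α) (r : ℝ) (y : α) : ℝ := min (max (dist x y - r) 0) r

theorem distRamp_nonneg (hr : 0 ≤ r) : 0 ≤ distRamp x r y := le_min (le_max_right _ _) hr

theorem distRamp_le : distRamp x r y ≤ r := min_le_right _ _

theorem distRamp_of_dist_le (hr : 0 ≤ r) (h : dist x y ≤ r) : distRamp x r y = 0 := by
  rw [distRamp, max_eq_right (by linarith), min_eq_left hr]

theorem distRamp_of_le_dist (h : 2 * r ≤ dist x y) : distRamp x r y = r := by
  rw [distRamp, min_eq_right (le_max_of_le_left (by linarith))]

theorem lipschitzWith_distRamp : LipschitzWith 1 (distRamp x r) := by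
  refine (LipschitzWith.max_const ?_ 0).min_const r
  refine LipschitzWith.of_dist_le_mul fun p q => ?_
  rw [NNReal.coe_one, one_mul, Real.dist_eq, sub_sub_sub_cancel_right, dist_comm x p,
    dist_comm x q]
  exact abs_dist_sub_le p q x

def rampTest (x : α) (r β : ℝ) (y : α) : ℂ := ((distRamp x r y ^ β : ℝ) : ℂ)

theorem rampTest_of_dist_le (hβ : 0 < β) (hr : 0 ≤ r) (h : dist x y ≤ r) :
    rampTest x r β y = 0 := by
  rw [rampTest, distRamp_of_dist_le hr h, Real.zero_rpow hβ.ne', Complex.ofReal_zero]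

theorem rampTest_of_le_dist (h : 2 * r ≤ dist x y) : rampTest x r β y = ((r ^ β : ℝ) : ℂ) := by
  rw [rampTest, distRamp_of_le_dist h]

theorem norm_rampTest (hr : 0 ≤ r) : ‖rampTest x r β y‖ = distRamp x r y ^ β := by
  rw [rampTest, Complex.norm_real, Real.norm_of_nonneg (Real.rpow_nonneg (distRamp_nonneg hr) β)]

theorem norm_rampTest_le (hr : 0 ≤ r) (hβ : 0 ≤ β) : ‖rampTest x r β y‖ ≤ r ^ β := by
  rw [norm_rampTest hr]
  exact Real.rpow_le_rpow (distRamp_nonneg hr) distRamp_le hβ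

theorem norm_rpow_sub_rampTest_le (hr : 0 ≤ r) (hβ : 0 ≤ β) :
    ‖((r ^ β : ℝ) : ℂ) - rampTest x r β y‖ ≤ r ^ β := by
  have hle := Real.rpow_le_rpow (distRamp_nonneg (x := x) (y := y) hr) distRamp_le hβ
  rw [rampTest, ← Complex.ofReal_sub, Complex.norm_real, Real.norm_of_nonneg (sub_nonneg.2 hle)]
  linarith [Real.rpow_nonneg (distRamp_nonneg (x := x) (y := y) hr) β]

theorem norm_rampTest_sub_le (hr : 0 ≤ r) (hβ0 : 0 ≤ β) (hβ1 : β ≤ 1) :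
    ‖rampTest x r β p - rampTest x r β q‖ ≤ dist p q ^ β := by
  rw [rampTest, rampTest, ← Complex.ofReal_sub, Complex.norm_real, Real.norm_eq_abs]
  calc |distRamp x r p ^ β - distRamp x r q ^ β| ≤ |distRamp x r p - distRamp x r q| ^ β :=
        Real.abs_rpow_sub_rpow_le hβ0 hβ1 (distRamp_nonneg hr) (distRamp_nonneg hr)
    _ ≤ dist p q ^ β := by
        gcongr
        simpa [Real.dist_eq] using lipschitzWith_distRamp.dist_le_mul p q

theorem continuous_rampTest (hβ : 0 ≤ β) : Continuous (rampTest x r β) :=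
  Complex.continuous_ofReal.comp
    (lipschitzWith_distRamp.continuous.rpow_const fun _ => Or.inr hβ)

end Ramp

theorem supNormOn_nonneg {α : Type*} (D : Set α) (f : α → ℂ) : 0 ≤ supNormOn D f :=
  Real.sSup_nonneg fun _ ⟨_, _, ht⟩ => ht ▸ norm_nonneg _

section HolderSeminorm

variable {α : Type*} [MetricSpace α] {D : Set α} {β K : ℝ} {g : α → ℂ}

theorem isHolderOn_of_norm_sub_le (h : ∀ p ∈ D, ∀ q ∈ D, ‖g p - g q‖ ≤ K * dist p q ^ β) :
    IsHolderOn D β g := by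
  refine ⟨K, ?_⟩
  rintro _ ⟨p, hp, q, hq, hpq, rfl⟩
  rw [div_le_iff₀ (Real.rpow_pos_of_pos (dist_pos.2 hpq) β)]
  exact h p hp q hq

theorem holderSemi_le_of_norm_sub_le (hK : 0 ≤ K)
    (h : ∀ p ∈ D, ∀ q ∈ D, ‖g p - g q‖ ≤ K * dist p q ^ β) : holderSemi D β g ≤ K := by
  refine Real.sSup_le ?_ hK
  rintro _ ⟨p, hp, q, hq, hpq, rfl⟩
  rw [div_le_iff₀ (Real.rpow_pos_of_pos (dist_pos.2 hpq) β)]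
  exact h p hp q hq

theorem norm_sub_le_of_holderSemi_le (hg : IsHolderOn D β g) (hK : holderSemi D β g ≤ K)
    {x y : α} (hx : x ∈ D) (hy : y ∈ D) (hxy : x ≠ y) : ‖g x - g y‖ ≤ K * dist x y ^ β := by
  rw [← div_le_iff₀ (Real.rpow_pos_of_pos (dist_pos.2 hxy) β)]
  exact (le_csSup hg ⟨x, hx, y, hy, hxy, rfl⟩).trans hK

theorem isHolderOn_rampTest {x : α} {r : ℝ} (hr : 0 ≤ r) (hβ0 : 0 ≤ β) (hβ1 : β ≤ 1) :
    IsHolderOn D β (rampTest x r β) :=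
  isHolderOn_of_norm_sub_le (K := 1) fun p _ q _ => by
    simpa using norm_rampTest_sub_le hr hβ0 hβ1

theorem holderSemi_rampTest_le {x : α} {r : ℝ} (hr : 0 ≤ r) (hβ0 : 0 ≤ β) (hβ1 : β ≤ 1) :
    holderSemi D β (rampTest x r β) ≤ 1 :=
  holderSemi_le_of_norm_sub_le zero_le_one fun p _ q _ => by
    simpa using norm_rampTest_sub_le hr hβ0 hβ1

end HolderSeminorm

theorem aestronglyMeasurable_restrict_of_continuousOn_diff_singleton {α E : Type*}
    [TopologicalSpace α] [MeasurableSpace α] [OpensMeasurableSpace α] [MeasurableSingletonClass α]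
    [NormedAddCommGroup E] [SecondCountableTopology E] {μ : Measure α} {f : α → E} {s : Set α}
    {a : α} (hs : MeasurableSet s) (hf : ContinuousOn f (s \ {a})) :
    AEStronglyMeasurable f (μ.restrict s) := by
  have hdiff := hf.aestronglyMeasurable (μ := μ) (hs.diff (measurableSet_singleton a))
  have hpoint := (continuousOn_singleton f a).aestronglyMeasurable (μ := μ)
    (measurableSet_singleton a)
  refine (aestronglyMeasurable_union_iff.2 ⟨hdiff, hpoint⟩).mono_measure
    (Measure.restrict_mono (fun y hy => ?_) le_rfl)
  by_cases hya : y = a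
  · exact Or.inr hya
  · exact Or.inl ⟨hy, hya⟩

section Kernel

variable {α : Type*} [MetricSpace α] {X Y : Set α} {s₁ s₂ s₃ N t β r : ℝ} {K : α → α → ℂ}
  {x x' y : α}

theorem MemK.continuousOn_diff_singleton (hK : MemK X Y s₁ s₂ s₃ K) (hx : x ∈ X) :
    ContinuousOn (K x) (Y \ {x}) :=
  hK.1.comp (Continuous.prodMk_right x).continuousOn fun _ hy =>
    ⟨⟨hx, hy.1⟩, fun hxy => hy.2 hxy.symm⟩

theorem norm_le_div_rpow_of_mem_upperBounds (hN : N ∈ upperBounds (kernelSet₁ X Y s₁ K))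
    (hs₁ : 0 ≤ s₁) (hx : x ∈ X) (hy : y ∈ Y) (ht : 0 < t) (htd : t ≤ dist x y) :
    ‖K x y‖ ≤ N / t ^ s₁ := by
  have hxy : x ≠ y := dist_pos.1 (ht.trans_le htd)
  rw [le_div_iff₀ (Real.rpow_pos_of_pos ht s₁)]
  calc ‖K x y‖ * t ^ s₁ ≤ ‖K x y‖ * dist x y ^ s₁ := by gcongr
    _ ≤ N := by
        rw [mul_comm]
        exact hN ⟨x, hx, y, hy, hxy, rfl⟩

theorem norm_mul_rampTest_le (hN : N ∈ upperBounds (kernelSet₁ X Y s₁ K)) (hN0 : 0 ≤ N)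
    (hs₁ : 0 ≤ s₁) (hβ : 0 < β) (hr : 0 < r) (hx : x ∈ X) (hy : y ∈ Y) :
    ‖K x y * rampTest x r β y‖ ≤ N / r ^ s₁ * r ^ β := by
  rcases le_or_gt (dist x y) r with hd | hd
  · rw [rampTest_of_dist_le hβ hr.le hd, mul_zero, norm_zero]
    positivity
  · rw [norm_mul]
    exact mul_le_mul (norm_le_div_rpow_of_mem_upperBounds hN hs₁ hx hy hr hd.le)
      (norm_rampTest_le hr.le hβ.le) (norm_nonneg _) (by positivity)

theorem norm_mul_rpow_sub_rampTest_le (hN : N ∈ upperBounds (kernelSet₁ X Y s₁ K))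
    (hN0 : 0 ≤ N) (hs₁ : 0 ≤ s₁) (hβ : 0 ≤ β) (hr : 0 < r) (hx' : x' ∈ X)
    (hxx' : dist x x' = 4 * r) (hy : y ∈ Y) :
    ‖K x' y * (((r ^ β : ℝ) : ℂ) - rampTest x r β y)‖ ≤ N / (2 * r) ^ s₁ * r ^ β := by
  rcases le_or_gt (2 * r) (dist x y) with hd | hd
  · rw [rampTest_of_le_dist hd, sub_self, mul_zero, norm_zero]
    positivity
  · have hfar : 2 * r ≤ dist x' y := by
      linarith [dist_triangle x y x', dist_comm y x']
    rw [norm_mul]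
    exact mul_le_mul (norm_le_div_rpow_of_mem_upperBounds hN hs₁ hx' hy (by positivity) hfar)
      (norm_rpow_sub_rampTest_le hr.le hβ) (norm_nonneg _) (by positivity)

end Kernel

theorem UpperAhlforsRegular.exists_measureReal_inter_ball_le {α : Type*} [MetricSpace α]
    [MeasurableSpace α] {ν : Measure α} {X Y : Set α} {υ : ℝ}
    (h : UpperAhlforsRegular ν X Y υ) :
    ∃ c ρ₀ : ℝ, 0 < ρ₀ ∧ ∀ x ∈ X, ∀ r, 0 < r → r ≤ ρ₀ → ν.real (Y ∩ ball x r) ≤ c * r ^ υ := by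
  obtain ⟨c, hc, r₀, hr₀, hreg⟩ := h
  obtain ⟨ρ₀, -, hρ₀, hρ₀r₀⟩ := ENNReal.lt_iff_exists_real_btwn.1 hr₀
  refine ⟨c, ρ₀, ENNReal.ofReal_pos.1 hρ₀, fun x hx r hr hrρ₀ => ?_⟩
  rw [inter_comm]
  exact ENNReal.toReal_le_of_le_ofReal (by positivity)
    (hreg x hx r hr ((ENNReal.ofReal_le_ofReal hrρ₀).trans_lt hρ₀r₀))

section Estimates

variable {α : Type*} [MetricSpace α] [MeasurableSpace α] {ν : Measure α}
  {X Y : Set α} {Z : α → α → ℂ} {υ β c C N r : ℝ} {x x' : α}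

theorem norm_qop_rampTest_le (hYm : MeasurableSet Y) (hYfin : ν Y < ⊤)
    (hN : N ∈ upperBounds (kernelSet₁ X Y υ Z)) (hN0 : 0 ≤ N) (hυ : 0 ≤ υ) (hβ : 0 ≤ β)
    (hr : 0 < r) (hx' : x' ∈ X) (hxx' : dist x x' = 4 * r)
    (hball : ν.real (Y ∩ ball x (2 * r)) ≤ c * (2 * r) ^ υ) :
    ‖Qop ν Y Z (rampTest x r β) x'‖ ≤ c * N * r ^ β := by
  have hvanish : Qop ν Y Z (rampTest x r β) x' =
      ∫ y in Y ∩ ball x (2 * r), Z x' y * (((r ^ β : ℝ) : ℂ) - rampTest x r β y) ∂ν := by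
    rw [Qop, rampTest_of_le_dist (by linarith)]
    refine setIntegral_eq_of_subset_of_forall_sdiff_eq_zero hYm inter_subset_left
      fun y hy => ?_
    have hfar : 2 * r ≤ dist x y := by
      simpa [dist_comm, hy.1] using hy.2
    rw [rampTest_of_le_dist hfar, sub_self, mul_zero]
  have hfin : ν (Y ∩ ball x (2 * r)) < ⊤ := (measure_mono inter_subset_left).trans_lt hYfin
  rw [hvanish]
  calc _ ≤ N / (2 * r) ^ υ * r ^ β * ν.real (Y ∩ ball x (2 * r)) :=
        norm_setIntegral_le_of_norm_le_const hfin fun y hy =>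
          norm_mul_rpow_sub_rampTest_le hN hN0 hυ hβ hr hx' hxx' hy.1
    _ ≤ N / (2 * r) ^ υ * r ^ β * (c * (2 * r) ^ υ) := by gcongr
    _ = c * N * r ^ β := by
        field_simp

theorem qop_rampTest_self [OpensMeasurableSpace α] (hYm : MeasurableSet Y) (hYfin : ν Y < ⊤)
    (hZm : AEStronglyMeasurable (Z x) (ν.restrict Y))
    (hN : N ∈ upperBounds (kernelSet₁ X Y υ Z)) (hN0 : 0 ≤ N) (hυ : 0 ≤ υ) (hβ : 0 < β)
    (hr : 0 < r) (hx : x ∈ X) :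
    Qop ν Y Z (rampTest x r β) x = -(∫ y in Y ∩ ball x (2 * r), Z x y * rampTest x r β y ∂ν +
      (∫ y in Y \ ball x (2 * r), Z x y ∂ν) * ((r ^ β : ℝ) : ℂ)) := by
  have hint : IntegrableOn (fun y => Z x y * rampTest x r β y) Y ν :=
    IntegrableOn.of_bound hYfin (hZm.mul (continuous_rampTest hβ.le).aestronglyMeasurable) _
      (ae_restrict_of_forall_mem hYm fun y hy => norm_mul_rampTest_le hN hN0 hυ hβ hr hx hy)
  have htail : ∫ y in Y \ ball x (2 * r), Z x y * rampTest x r β y ∂ν =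
      (∫ y in Y \ ball x (2 * r), Z x y ∂ν) * ((r ^ β : ℝ) : ℂ) := by
    rw [← integral_mul_const]
    refine setIntegral_congr_fun (hYm.diff measurableSet_ball) fun y hy => ?_
    rw [rampTest_of_le_dist (by simpa [dist_comm] using hy.2)]
  rw [← htail, integral_inter_add_sdiff measurableSet_ball hint, Qop, ← integral_neg,
    rampTest_of_dist_le hβ hr.le (by simp [hr.le])]
  simp only [zero_sub, mul_neg]

theorem norm_setIntegral_diff_ball_le_of_rampTest [OpensMeasurableSpace α]
    (hYm : MeasurableSet Y) (hYfin : ν Y < ⊤) (hZm : AEStronglyMeasurable (Z x) (ν.restrict Y))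
    (hN : N ∈ upperBounds (kernelSet₁ X Y υ Z)) (hN0 : 0 ≤ N) (hυ : 0 ≤ υ) (hβ : 0 < β)
    (hr : 0 < r) (hx : x ∈ X) (hx' : x' ∈ X) (hxx' : dist x x' = 4 * r)
    (hball : ν.real (Y ∩ ball x (2 * r)) ≤ c * (2 * r) ^ υ)
    (hQ : ‖Qop ν Y Z (rampTest x r β) x - Qop ν Y Z (rampTest x r β) x'‖ ≤ C * dist x x' ^ β) :
    ‖∫ y in Y \ ball x (2 * r), Z x y ∂ν‖ ≤ C * 4 ^ β + (1 + 2 ^ υ) * c * N := by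
  have hQx := qop_rampTest_self hYm hYfin hZm hN hN0 hυ hβ hr hx
  have hfar := norm_qop_rampTest_le hYm hYfin hN hN0 hυ hβ.le hr hx' hxx' hball
  set Q := Qop ν Y Z (rampTest x r β)
  set near := ∫ y in Y ∩ ball x (2 * r), Z x y * rampTest x r β y ∂ν
  have hfin : ν (Y ∩ ball x (2 * r)) < ⊤ := (measure_mono inter_subset_left).trans_lt hYfin
  have hnear : ‖near‖ ≤ 2 ^ υ * c * N * r ^ β :=
    calc ‖near‖ ≤ N / r ^ υ * r ^ β * ν.real (Y ∩ ball x (2 * r)) :=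
          norm_setIntegral_le_of_norm_le_const hfin fun y hy =>
            norm_mul_rampTest_le hN hN0 hυ hβ hr hx hy.1
      _ ≤ N / r ^ υ * r ^ β * (c * (2 * r) ^ υ) := by gcongr
      _ = 2 ^ υ * c * N * r ^ β := by
          rw [Real.mul_rpow zero_le_two hr.le]
          field_simp
  have hdecomp : (∫ y in Y \ ball x (2 * r), Z x y ∂ν) * ((r ^ β : ℝ) : ℂ) =
      -((Q x - Q x') + Q x' + near) := by
    rw [hQx]
    ring
  refine le_of_mul_le_mul_right ?_ (Real.rpow_pos_of_pos hr β)
  calc ‖∫ y in Y \ ball x (2 * r), Z x y ∂ν‖ * r ^ β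
      = ‖(Q x - Q x') + Q x' + near‖ := by
        rw [← norm_neg (Q x - Q x' + Q x' + near), ← hdecomp, norm_mul, Complex.norm_real,
          Real.norm_of_nonneg (Real.rpow_nonneg hr.le β)]
    _ ≤ ‖Q x - Q x'‖ + ‖Q x'‖ + ‖near‖ := norm_add₃_le
    _ ≤ C * (4 * r) ^ β + c * N * r ^ β + 2 ^ υ * c * N * r ^ β := by
        rw [← hxx']
        gcongr
    _ = (C * 4 ^ β + (1 + 2 ^ υ) * c * N) * r ^ β := by
        rw [Real.mul_rpow (by norm_num) hr.le]
        ring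

theorem norm_setIntegral_diff_ball_le_of_le {T s : ℝ} (hYfin : ν Y < ⊤)
    (hN : N ∈ upperBounds (kernelSet₁ X Y υ Z)) (hN0 : 0 ≤ N) (hυ : 0 ≤ υ) (hx : x ∈ X)
    (hT : 0 < T) (hTs : T ≤ s) :
    ‖∫ y in Y \ ball x s, Z x y ∂ν‖ ≤ N / T ^ υ * ν.real Y :=
  calc ‖∫ y in Y \ ball x s, Z x y ∂ν‖ ≤ N / T ^ υ * ν.real (Y \ ball x s) :=
        norm_setIntegral_le_of_norm_le_const ((measure_mono sdiff_subset).trans_lt hYfin)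
          fun y hy => norm_le_div_rpow_of_mem_upperBounds hN hυ hx hy.1 hT
            (hTs.trans (by simpa [dist_comm] using hy.2))
    _ ≤ N / T ^ υ * ν.real Y := by
        gcongr
        · exact hYfin.ne
        · exact sdiff_subset

end Estimates

theorem stmt_5_general {M : Type*} [MetricSpace M] [MeasurableSpace M] [BorelSpace M]
    (X Y : Set M) (ν : Measure M) (hYm : MeasurableSet Y)
    (υ β s₂ s₃ : ℝ)
    (hυ : 0 < υ) (hβ0 : 0 < β) (hβ1 : β ≤ 1)
    (hYfin : ν Y < ⊤)
    (ha : ∃ a : ℝ, 0 < a ∧ ∀ ρ : ℝ, 0 < ρ → ρ < a → ∀ x' ∈ X, ∃ x'' ∈ X, dist x' x'' = ρ)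
    (hreg : UpperAhlforsRegular ν X Y υ)
    (Z : M → M → ℂ) (hZ : MemK X Y υ s₂ s₃ Z)
    (hQ : ∃ C : ℝ, 0 < C ∧ ∀ g : M → ℂ, IsHolderOn (X ∪ Y) β g →
      BoundedOnSet X (Qop ν Y Z g) ∧
      IsHolderOn X β (Qop ν Y Z g) ∧
      supNormOn X (Qop ν Y Z g) + holderSemi X β (Qop ν Y Z g) ≤
        C * holderSemi (X ∪ Y) β g) :
    BddAbove (maxFunSet ν X Y Z) := by
  obtain ⟨c, ρ₀, hρ₀, hball⟩ := hreg.exists_measureReal_inter_ball_le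
  obtain ⟨a, ha, hsphere⟩ := ha
  obtain ⟨C, hC, hQ⟩ := hQ
  set N := sSup (kernelSet₁ X Y υ Z)
  have hN : N ∈ upperBounds (kernelSet₁ X Y υ Z) := fun _ ht => le_csSup hZ.2.1 ht
  have hN0 : 0 ≤ N := Real.sSup_nonneg fun _ ⟨_, _, _, _, _, ht⟩ => ht ▸ by positivity
  set T := min (a / 4) ρ₀
  have hT : 0 < T := lt_min (by positivity) hρ₀
  refine ⟨max (C * 4 ^ β + (1 + 2 ^ υ) * c * N) (N / T ^ υ * ν.real Y), ?_⟩
  rintro _ ⟨x, hx, s, hs, rfl⟩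
  rcases lt_or_ge s T with hsT | hTs
  · obtain ⟨r, rfl⟩ : ∃ r, s = 2 * r := ⟨s / 2, by ring⟩
    have hr : 0 < r := by linarith
    obtain ⟨x', hx', hxx'⟩ := hsphere (4 * r) (by positivity)
      (by linarith [min_le_left (a / 4) ρ₀]) x hx
    obtain ⟨-, hhol, hbound⟩ := hQ _ (isHolderOn_rampTest (x := x) hr.le hβ0.le hβ1)
    have hsemi : holderSemi X β (Qop ν Y Z (rampTest x r β)) ≤ C :=
      calc _ ≤ C * holderSemi (X ∪ Y) β (rampTest x r β) := by
            linarith [supNormOn_nonneg X (Qop ν Y Z (rampTest x r β))]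
        _ ≤ C := mul_le_of_le_one_right hC.le (holderSemi_rampTest_le hr.le hβ0.le hβ1)
    refine le_max_of_le_left (norm_setIntegral_diff_ball_le_of_rampTest hYm hYfin
      (aestronglyMeasurable_restrict_of_continuousOn_diff_singleton hYm
        (hZ.continuousOn_diff_singleton hx)) hN hN0 hυ.le hβ0 hr hx hx' hxx'
      (hball x hx _ (by positivity) (by linarith [min_le_right (a / 4) ρ₀]))
      (norm_sub_le_of_holderSemi_le hhol hsemi hx hx' (dist_pos.1 (by rw [hxx']; positivity))))
  · exact le_max_of_le_right (norm_setIntegral_diff_ball_le_of_le hYfin hN hN0 hυ.le hx hT hTs)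

theorem stmt_5 {M : Type*} [MetricSpace M] [MeasurableSpace M] [BorelSpace M]
    (X Y : Set M) (ν : Measure M) (hYm : MeasurableSet Y)
    (υ β s₂ s₃ : ℝ)
    (hυ : 0 < υ) (hβ0 : 0 < β) (hβ1 : β ≤ 1) (hs₂ : β ≤ s₂) (hs₃0 : 0 < s₃) (hs₃1 : s₃ ≤ 1)
    (hball : ∀ x ∈ X, ∀ r : ℝ, 0 < r → ν (ball x r ∩ Y) < ⊤)
    (hYfin : ν Y < ⊤)
    (ha : ∃ a : ℝ, 0 < a ∧ ∀ ρ : ℝ, 0 < ρ → ρ < a → ∀ x' ∈ X, ∃ x'' ∈ X, dist x' x'' = ρ)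
    (h1 : υ < s₂ - β) (h2 : s₂ < υ + β + s₃) (h3 : s₂ ≤ υ + s₃)
    (hreg : UpperAhlforsRegular ν X Y υ)
    (Z : M → M → ℂ) (hZ : MemK X Y υ s₂ s₃ Z)
    (hQ : ∃ C : ℝ, 0 < C ∧ ∀ g : M → ℂ, IsHolderOn (X ∪ Y) β g →
      BoundedOnSet X (Qop ν Y Z g) ∧
      IsHolderOn X β (Qop ν Y Z g) ∧
      supNormOn X (Qop ν Y Z g) + holderSemi X β (Qop ν Y Z g) ≤
        C * holderSemi (X ∪ Y) β g) :
    BddAbove (maxFunSet ν X Y Z) :=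
  stmt_5_general X Y ν hYm υ β s₂ s₃ hυ hβ0 hβ1 hYfin ha hreg Z hZ hQ
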